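/- Let P be a regular power series method, let (x_j) be a real sequence and L ∈ ℝ. Then (x_j) is P-statistically convergent to L if and only if there exists a subset E ⊆ ℕ such that the P-density δ_P(E) exists and equals 0, and the sequence (x_j) converges to L along the complement of E, i.e., for every ε > 0 there exists N such that |x_j − L| < ε for all j ≥ N with j ∉ E. -/

import Mathlib

/-!
`⇐`: the exceptional set `{j | ε ≤ |x j - L|}` lies in `E` up to finitely many indices, and finite
sets are `P`-null by regularity.

`⇒`: the sets `F m = {j | 1/(m+1) ≤ |x j - L|}` are increasing and `P`-null; glue them into
`E = ⋃ m, F m ∩ [N m, ∞)`. Choose points `v m → R` beyond which `densityFn (F m) < 1/(m+1)`, and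
`N m` so large that `densityFn [N m, ∞) < 1/(m+1)` at every `t ≤ v m`; this is uniform in `t`
because `s(t) ≥ s 0` and the tail of the series at `v m` dominates the tail at `t`.
For `v m < t ≤ v (m+1)` we get `E ⊆ F m ∪ [N (m+1), ∞)`, so `densityFn E t < 2/(m+1)`.
-/

open Filter Topology
open scoped ENNReal

/-- A power series method `P`: a sequence `(s j)` of nonnegative reals with `s 0 > 0`
whose power series `s(t) = ∑ s j * t ^ j` has radius of convergence `R`, `0 < R ≤ ∞`. -/
structure PowerSeriesMethod where
  s : ℕ → ℝ
  s_nonneg : ∀ j, 0 ≤ s j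
  s0_pos : 0 < s 0
  R : ℝ≥0∞
  R_pos : 0 < R
  summable_of_lt : ∀ t : ℝ, 0 < t → ENNReal.ofReal t < R → Summable fun j => s j * t ^ j
  not_summable_of_gt : ∀ t : ℝ, R < ENNReal.ofReal t → ¬ Summable fun j => s j * t ^ j

namespace PowerSeriesMethod

/-- The filter of `t` tending to `R` from the left (through `0 < t < R`);
if `R = ∞` this is `atTop`. -/
noncomputable def limFilter (P : PowerSeriesMethod) : Filter ℝ :=
  if P.R = ⊤ then Filter.atTop else nhdsWithin P.R.toReal (Set.Ioo 0 P.R.toReal)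

/-- `s(t) = ∑ s j t ^ j`. -/
noncomputable def sum (P : PowerSeriesMethod) (t : ℝ) : ℝ := ∑' j, P.s j * t ^ j

/-- The quotient `(∑_{j ∈ E} s j t ^ j) / s(t)` whose limit as `t → R⁻` is the `P`-density. -/
noncomputable def densityFn (P : PowerSeriesMethod) (E : Set ℕ) (t : ℝ) : ℝ :=
  (∑' j, Set.indicator E (fun j => P.s j * t ^ j) j) / P.sum t

/-- `E ⊆ ℕ` has `P`-density `d`. -/
def HasDensity (P : PowerSeriesMethod) (E : Set ℕ) (d : ℝ) : Prop :=
  Tendsto (P.densityFn E) P.limFilter (𝓝 d)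

/-- The power series method `P` is regular. -/
def Regular (P : PowerSeriesMethod) : Prop :=
  ∀ j, Tendsto (fun t => P.s j * t ^ j / P.sum t) P.limFilter (𝓝 0)

/-- The sequence `x` is `P`-statistically convergent to `L`. -/
def StatTendsto (P : PowerSeriesMethod) (x : ℕ → ℝ) (L : ℝ) : Prop :=
  ∀ ε : ℝ, 0 < ε → P.HasDensity {j | ε ≤ |x j - L|} 0

end PowerSeriesMethod

open Set

lemma exists_lt_le_succ {α : Type*} [LinearOrder α] (v : ℕ → α) {a : α} {k n : ℕ} (hkn : k ≤ n)
    (hk : v k < a) (hn : a ≤ v n) : ∃ m, k ≤ m ∧ v m < a ∧ a ≤ v (m + 1) := by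
  induction n, hkn using Nat.le_induction with
  | base => exact absurd hk hn.not_gt
  | succ n hkn ih =>
    by_cases h : a ≤ v n
    · exact ih h
    · exact ⟨n, hkn, lt_of_not_ge h, hn⟩

namespace PowerSeriesMethod

variable (P : PowerSeriesMethod)

def domain : Set ℝ := {t | 0 < t ∧ ENNReal.ofReal t < P.R}

lemma term_nonneg {t : ℝ} (ht : 0 ≤ t) (j : ℕ) : 0 ≤ P.s j * t ^ j :=
  mul_nonneg (P.s_nonneg j) (pow_nonneg ht j)

variable {P}

lemma limFilter_of_eq_top (h : P.R = ⊤) : P.limFilter = atTop := if_pos h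

lemma limFilter_of_ne_top (h : P.R ≠ ⊤) : P.limFilter = 𝓝[<] P.R.toReal := by
  rw [limFilter, if_neg h, nhdsWithin_Ioo_eq_nhdsLT (ENNReal.toReal_pos P.R_pos.ne' h)]

lemma domain_of_eq_top (h : P.R = ⊤) : P.domain = Ioi 0 := by
  ext t
  simp [domain, h]

lemma domain_of_ne_top (h : P.R ≠ ⊤) : P.domain = Ioo 0 P.R.toReal := by
  ext t
  exact and_congr_right fun ht => ENNReal.ofReal_lt_iff_lt_toReal ht.le h

lemma eventually_mem_domain : ∀ᶠ t in P.limFilter, t ∈ P.domain := by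
  rcases eq_or_ne P.R ⊤ with h | h
  · rw [limFilter_of_eq_top h, domain_of_eq_top h]
    exact Ioi_mem_atTop 0
  · rw [limFilter_of_ne_top h, domain_of_ne_top h]
    exact Ioo_mem_nhdsLT (ENNReal.toReal_pos P.R_pos.ne' h)

lemma Ioi_mem_limFilter {u : ℝ} (hu : u ∈ P.domain) : Ioi u ∈ P.limFilter := by
  rcases eq_or_ne P.R ⊤ with h | h
  · rw [limFilter_of_eq_top h]
    exact Ioi_mem_atTop u
  · rw [limFilter_of_ne_top h]
    rw [domain_of_ne_top h] at hu
    exact mem_of_superset (Ioo_mem_nhdsLT hu.2) Ioo_subset_Ioi_self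

lemma exists_forall_mem_of_mem_limFilter {S : Set ℝ} (hS : S ∈ P.limFilter) :
    ∃ w ∈ P.domain, ∀ t ∈ P.domain, w < t → t ∈ S := by
  rcases eq_or_ne P.R ⊤ with h | h
  · rw [limFilter_of_eq_top h] at hS
    rw [domain_of_eq_top h]
    obtain ⟨a, ha⟩ := mem_atTop_sets.1 hS
    exact ⟨max a 1, mem_Ioi.2 (lt_max_of_lt_right one_pos),
      fun t _ hwt => ha t ((le_max_left a 1).trans hwt.le)⟩
  · rw [limFilter_of_ne_top h] at hS
    rw [domain_of_ne_top h]
    obtain ⟨l, hl, hlS⟩ := mem_nhdsLT_iff_exists_Ioo_subset.1 hS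
    have hR : 0 < P.R.toReal := ENNReal.toReal_pos P.R_pos.ne' h
    exact ⟨max l (P.R.toReal / 2), ⟨lt_max_of_lt_right (half_pos hR), max_lt hl (half_lt_self hR)⟩,
      fun t ht hwt => hlS ⟨(le_max_left _ _).trans_lt hwt, ht.2⟩⟩

lemma exists_seq_mem_domain_tendsto :
    ∃ c : ℕ → ℝ, (∀ m, c m ∈ P.domain) ∧ Tendsto c atTop P.limFilter := by
  obtain ⟨c, hc⟩ : ∃ c : ℕ → ℝ, Tendsto c atTop P.limFilter := by
    rcases eq_or_ne P.R ⊤ with h | h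
    · rw [limFilter_of_eq_top h]
      exact exists_seq_tendsto _
    · rw [limFilter_of_ne_top h]
      exact exists_seq_tendsto _
  obtain ⟨M, hM⟩ := eventually_atTop.1 (hc.eventually eventually_mem_domain)
  exact ⟨fun m => c (m + M), fun m => hM _ (Nat.le_add_left M m), (tendsto_add_atTop_iff_nat M).2 hc⟩

variable {t : ℝ}

lemma summable_of_mem_domain (ht : t ∈ P.domain) : Summable fun j => P.s j * t ^ j :=
  P.summable_of_lt t ht.1 ht.2

lemma s_zero_le_sum (ht : t ∈ P.domain) : P.s 0 ≤ P.sum t := by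
  simpa [sum] using (summable_of_mem_domain ht).le_tsum 0 fun j _ => P.term_nonneg ht.1.le j

lemma sum_pos (ht : t ∈ P.domain) : 0 < P.sum t :=
  P.s0_pos.trans_le (s_zero_le_sum ht)

lemma densityFn_nonneg (ht : t ∈ P.domain) (E : Set ℕ) : 0 ≤ P.densityFn E t :=
  div_nonneg (tsum_nonneg fun _ => indicator_nonneg (fun j _ => P.term_nonneg ht.1.le j) _)
    (sum_pos ht).le

lemma densityFn_mono (ht : t ∈ P.domain) {E F : Set ℕ} (hEF : E ⊆ F) :
    P.densityFn E t ≤ P.densityFn F t := by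
  have hsum := summable_of_mem_domain ht
  refine div_le_div_of_nonneg_right ?_ (sum_pos ht).le
  exact (hsum.indicator E).tsum_le_tsum
    (fun j => indicator_le_indicator_of_subset hEF (P.term_nonneg ht.1.le) j) (hsum.indicator F)

lemma densityFn_union_le (ht : t ∈ P.domain) (A B : Set ℕ) :
    P.densityFn (A ∪ B) t ≤ P.densityFn A t + P.densityFn B t := by
  have hsum := summable_of_mem_domain ht
  rw [densityFn, densityFn, densityFn, ← add_div, ← (hsum.indicator A).tsum_add (hsum.indicator B)]
  refine div_le_div_of_nonneg_right ?_ (sum_pos ht).le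
  refine (hsum.indicator _).tsum_le_tsum (fun j => ?_) ((hsum.indicator A).add (hsum.indicator B))
  have h := congrFun (indicator_union_add_inter (fun j => P.s j * t ^ j) A B) j
  rw [Pi.add_apply, Pi.add_apply] at h
  linarith [indicator_nonneg (s := A ∩ B) (fun j _ => P.term_nonneg ht.1.le j) j]

lemma tendsto_tsum_indicator_Ici {u : ℝ} (hu : u ∈ P.domain) :
    Tendsto (fun N => ∑' j, {j | N ≤ j}.indicator (fun j => P.s j * u ^ j) j) atTop (𝓝 0) := by
  simpa using tendsto_tsum_of_dominated_convergence (g := 0) (summable_of_mem_domain hu)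
    (f := fun N j => {j | N ≤ j}.indicator (fun j => P.s j * u ^ j) j)
    (fun j => tendsto_nhds_of_eventually_eq <| (eventually_gt_atTop j).mono
      fun N hN => indicator_of_notMem (not_le.2 hN) _)
    (Eventually.of_forall fun N j => by
      rw [Real.norm_of_nonneg (indicator_nonneg (fun j _ => P.term_nonneg hu.1.le j) j)]
      exact indicator_le_self' (fun j _ => P.term_nonneg hu.1.le j) j)

lemma eventually_densityFn_Ici_lt {u ε : ℝ} (hu : u ∈ P.domain) (hε : 0 < ε) :
    ∀ᶠ N in atTop, ∀ t ∈ P.domain, t ≤ u → P.densityFn {j | N ≤ j} t < ε := by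
  filter_upwards [(tendsto_tsum_indicator_Ici hu).eventually (gt_mem_nhds (mul_pos hε P.s0_pos))]
    with N hN t ht htu
  have hnum : ∑' j, {j | N ≤ j}.indicator (fun j => P.s j * t ^ j) j ≤
      ∑' j, {j | N ≤ j}.indicator (fun j => P.s j * u ^ j) j :=
    ((summable_of_mem_domain ht).indicator _).tsum_le_tsum
      (fun j => indicator_le_indicator
        (mul_le_mul_of_nonneg_left (pow_le_pow_left₀ ht.1.le htu j) (P.s_nonneg j)))
      ((summable_of_mem_domain hu).indicator _)
  calc P.densityFn {j | N ≤ j} t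
      ≤ (∑' j, {j | N ≤ j}.indicator (fun j => P.s j * u ^ j) j) / P.s 0 :=
        div_le_div₀ (hnum.trans' (tsum_nonneg fun _ =>
          indicator_nonneg (fun j _ => P.term_nonneg ht.1.le j) _)) hnum P.s0_pos (s_zero_le_sum ht)
    _ < ε := (div_lt_iff₀ P.s0_pos).2 hN

lemma hasDensity_zero_iff {E : Set ℕ} :
    P.HasDensity E 0 ↔ ∀ ε > 0, ∀ᶠ t in P.limFilter, P.densityFn E t < ε := by
  refine ⟨fun h ε hε => h.eventually (gt_mem_nhds hε), fun h => tendsto_order.2 ⟨fun a ha => ?_, h⟩⟩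
  filter_upwards [eventually_mem_domain] with t ht
  exact ha.trans_le (densityFn_nonneg ht E)

lemma hasDensity_zero_of_subset {E F : Set ℕ} (hF : P.HasDensity F 0) (hEF : E ⊆ F) :
    P.HasDensity E 0 := by
  rw [hasDensity_zero_iff] at hF ⊢
  intro ε hε
  filter_upwards [hF ε hε, eventually_mem_domain] with t hFt ht
  exact (densityFn_mono ht hEF).trans_lt hFt

lemma hasDensity_zero_union {A B : Set ℕ} (hA : P.HasDensity A 0) (hB : P.HasDensity B 0) :
    P.HasDensity (A ∪ B) 0 := by
  rw [hasDensity_zero_iff] at hA hB ⊢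
  intro ε hε
  filter_upwards [hA (ε / 2) (half_pos hε), hB (ε / 2) (half_pos hε), eventually_mem_domain]
    with t hAt hBt ht
  linarith [densityFn_union_le ht A B]

lemma hasDensity_zero_of_finite (hP : P.Regular) {E : Set ℕ} (hE : E.Finite) :
    P.HasDensity E 0 := by
  have hfin : P.densityFn E = fun t => ∑ j ∈ hE.toFinset, P.s j * t ^ j / P.sum t := by
    funext t
    rw [densityFn, ← Finset.sum_div,
      tsum_eq_sum fun j hj => indicator_of_notMem (fun h => hj (hE.mem_toFinset.2 h)) _]
    exact congrArg (· / P.sum t) (Finset.sum_congr rfl fun j hj =>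
      indicator_of_mem (hE.mem_toFinset.1 hj) _)
  rw [HasDensity, hfin]
  simpa using tendsto_finsetSum hE.toFinset fun j _ => hP j

theorem exists_hasDensity_zero_eventually_mem {F : ℕ → Set ℕ} (hF : Monotone F)
    (hF0 : ∀ m, P.HasDensity (F m) 0) :
    ∃ E, P.HasDensity E 0 ∧ ∀ m, ∃ N, ∀ j, N ≤ j → j ∈ F m → j ∈ E := by
  obtain ⟨c, hcD, hc⟩ := P.exists_seq_mem_domain_tendsto
  choose w hwD hw using fun m : ℕ => exists_forall_mem_of_mem_limFilter
    ((hF0 m).eventually (gt_mem_nhds (Nat.one_div_pos_of_nat (n := m))))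
  set v : ℕ → ℝ := fun m => max (w m) (c m)
  have hvD : ∀ m, v m ∈ P.domain := fun m => by
    rcases max_choice (w m) (c m) with h | h <;> simp only [v, h, hwD, hcD]
  obtain ⟨N, hN, htail⟩ := extraction_forall_of_eventually fun m =>
    eventually_densityFn_Ici_lt (hvD m) (Nat.one_div_pos_of_nat (n := m))
  refine ⟨⋃ m, F m ∩ {j | N m ≤ j}, ?_, fun m => ⟨N m, fun j hj hjF => mem_iUnion.2 ⟨m, hjF, hj⟩⟩⟩
  rw [hasDensity_zero_iff]
  intro ε hε
  obtain ⟨k, hk⟩ := exists_nat_one_div_lt (half_pos hε)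
  filter_upwards [eventually_mem_domain, Ioi_mem_limFilter (hvD k)] with t ht hkt
  obtain ⟨n, htn, hkn⟩ := ((hc.eventually (Ioi_mem_limFilter ht)).and (eventually_ge_atTop k)).exists
  obtain ⟨m, hkm, hmt, htm⟩ := exists_lt_le_succ v hkn hkt (le_max_of_le_right (le_of_lt htn))
  have hE : ⋃ m, F m ∩ {j | N m ≤ j} ⊆ F m ∪ {j | N (m + 1) ≤ j} := by
    rintro j ⟨-, ⟨m', rfl⟩, hjF, hjN⟩
    rcases le_or_gt m' m with h | h
    · exact Or.inl (hF h hjF)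
    · exact Or.inr ((hN.monotone h).trans hjN)
  calc P.densityFn (⋃ m, F m ∩ {j | N m ≤ j}) t
      ≤ P.densityFn (F m) t + P.densityFn {j | N (m + 1) ≤ j} t :=
        (densityFn_mono ht hE).trans (densityFn_union_le ht _ _)
    _ < 1 / (m + 1) + 1 / ((m + 1 : ℕ) + 1) :=
        add_lt_add (hw m t ht ((le_max_left _ _).trans_lt hmt)) (htail (m + 1) t ht htm)
    _ ≤ 1 / (k + 1) + 1 / (k + 1) :=
        add_le_add (Nat.one_div_le_one_div hkm) (Nat.one_div_le_one_div (hkm.trans m.le_succ))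
    _ < ε := by linarith

end PowerSeriesMethod

/-- `(x j)` is `P`-statistically convergent to `L` iff there is `E ⊆ ℕ`
with `P`-density `0` such that `x` converges to `L` along the complement of `E`. -/
theorem pstat_iff_exists_density_zero_subseq (P : PowerSeriesMethod) (hP : P.Regular)
    (x : ℕ → ℝ) (L : ℝ) :
    P.StatTendsto x L ↔
      ∃ E : Set ℕ, P.HasDensity E 0 ∧
        ∀ ε : ℝ, 0 < ε → ∃ N : ℕ, ∀ j : ℕ, N ≤ j → j ∉ E → |x j - L| < ε := by
  constructor
  · intro hx
    have hF : Monotone fun m : ℕ => {j | 1 / ((m : ℝ) + 1) ≤ |x j - L|} :=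
      fun m n hmn j (hj : 1 / ((m : ℝ) + 1) ≤ |x j - L|) => (Nat.one_div_le_one_div hmn).trans hj
    obtain ⟨E, hE, hFE⟩ :=
      PowerSeriesMethod.exists_hasDensity_zero_eventually_mem hF fun m => hx _ Nat.one_div_pos_of_nat
    refine ⟨E, hE, fun ε hε => ?_⟩
    obtain ⟨k, hk⟩ := exists_nat_one_div_lt hε
    obtain ⟨N, hN⟩ := hFE k
    exact ⟨N, fun j hj hjE => (not_le.1 fun h => hjE (hN j hj h)).trans hk⟩
  · rintro ⟨E, hE, hconv⟩ ε hε
    obtain ⟨N, hN⟩ := hconv ε hε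
    refine P.hasDensity_zero_of_subset
      (P.hasDensity_zero_union hE (P.hasDensity_zero_of_finite hP (Set.finite_lt_nat N))) ?_
    intro j (hj : ε ≤ |x j - L|)
    by_cases hjE : j ∈ E
    · exact Or.inl hjE
    · exact Or.inr (not_le.1 fun hNj => (hN j hNj hjE).not_ge hj)
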